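/- For every integer s ≥ 0 and every real x with 0 ≤ x ≤ √((4s+4)(4s+5)), the Taylor polynomial T_{4s+1}(x) = ∑_{i=0}^{2s} (−1)^i x^{2i+1}/(2i+1)! satisfies T_{4s+1}(x) ≥ T_{4s+5}(x) ≥ sin x. -/

import Mathlib

/-!
The first inequality holds because `T_{4s+5} - T_{4s+1} = -x^{4s+3}/(4s+3)! + x^{4s+5}/(4s+5)!`,
and the second term is at most the first exactly when `x² ≤ (4s+4)(4s+5)`.
The second inequality holds for every `x ≥ 0`: starting from `cos ≤ 1` and integrating
repeatedly from `0`, the partial sums of the sine and cosine series alternately over- and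
underestimate `sin` and `cos` on `[0, ∞)`.
-/

open Finset Nat Real

noncomputable def sinTaylor (n : ℕ) (x : ℝ) : ℝ :=
  ∑ i ∈ range n, (-1 : ℝ) ^ i * x ^ (2 * i + 1) / (2 * i + 1)!

noncomputable def cosTaylor (n : ℕ) (x : ℝ) : ℝ :=
  ∑ i ∈ range n, (-1 : ℝ) ^ i * x ^ (2 * i) / (2 * i)!

theorem hasDerivAt_pow_succ_div_factorial (k : ℕ) (x : ℝ) :
    HasDerivAt (fun y : ℝ => y ^ (k + 1) / (k + 1)!) (x ^ k / k !) x := by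
  refine ((hasDerivAt_pow (k + 1) x).div_const _).congr_deriv ?_
  rw [Nat.factorial_succ]
  push_cast
  field_simp

theorem pow_add_two_div_factorial_le {x : ℝ} {k : ℕ} (hx : 0 ≤ x)
    (hxk : x ^ 2 ≤ (k + 1) * (k + 2)) : x ^ (k + 2) / (k + 2)! ≤ x ^ k / k ! := by
  have hfac : ((k + 2)! : ℝ) = k ! * ((k + 1) * (k + 2)) := by
    rw [Nat.factorial_succ, Nat.factorial_succ]; push_cast; ring
  have hratio : x ^ 2 / ((k + 1) * (k + 2)) ≤ 1 := div_le_one_of_le₀ hxk (by positivity)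
  calc x ^ (k + 2) / (k + 2)! = x ^ k / k ! * (x ^ 2 / ((k + 1) * (k + 2))) := by
        rw [hfac, pow_add]; field_simp
    _ ≤ x ^ k / k ! := mul_le_of_le_one_right (by positivity) hratio

theorem sinTaylor_apply_zero (n : ℕ) : sinTaylor n 0 = 0 := by
  simp [sinTaylor]

theorem cosTaylor_succ_apply_zero (n : ℕ) : cosTaylor (n + 1) 0 = 1 := by
  simp [cosTaylor, sum_range_succ']

theorem hasDerivAt_sinTaylor (n : ℕ) (x : ℝ) : HasDerivAt (sinTaylor n) (cosTaylor n x) x := by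
  have h := HasDerivAt.fun_sum (u := range n) fun i _ =>
    (hasDerivAt_pow_succ_div_factorial (2 * i) x).const_mul ((-1 : ℝ) ^ i)
  simp only [← mul_div_assoc] at h
  exact h

theorem hasDerivAt_cosTaylor_succ (n : ℕ) (x : ℝ) :
    HasDerivAt (cosTaylor (n + 1)) (-sinTaylor n x) x := by
  have h := (HasDerivAt.fun_sum (u := range n) fun i _ =>
    (hasDerivAt_pow_succ_div_factorial (2 * i + 1) x).const_mul ((-1 : ℝ) ^ (i + 1))).add_const 1
  refine (h.congr_of_eventuallyEq (.of_forall fun y => ?_)).congr_deriv ?_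
  · simp [cosTaylor, sum_range_succ', mul_div_assoc, Nat.mul_succ]
  · simp [sinTaylor, pow_succ, ← sum_neg_distrib, mul_div_assoc]

theorem nonneg_of_hasDerivAt_nonneg {f f' : ℝ → ℝ} {a x : ℝ}
    (hf : ∀ y, a ≤ y → HasDerivAt f (f' y) y) (hf' : ∀ y, a ≤ y → 0 ≤ f' y)
    (ha : 0 ≤ f a) (hx : a ≤ x) : 0 ≤ f x := by
  have hmono : MonotoneOn f (Set.Ici a) := by
    refine monotoneOn_of_hasDerivWithinAt_nonneg (f' := f') (convex_Ici a)
      (fun y hy => (hf y hy).continuousAt.continuousWithinAt) (fun y hy => ?_) (fun y hy => ?_)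
    all_goals rw [interior_Ici] at hy
    · exact (hf y hy.le).hasDerivWithinAt
    · exact hf' y hy.le
  exact ha.trans (hmono Set.self_mem_Ici hx hx)

theorem neg_one_pow_mul_sin_sub_sinTaylor_nonneg {n : ℕ}
    (hcos : ∀ y, 0 ≤ y → 0 ≤ (-1) ^ n * (cos y - cosTaylor n y)) {x : ℝ} (hx : 0 ≤ x) :
    0 ≤ (-1) ^ n * (sin x - sinTaylor n x) :=
  nonneg_of_hasDerivAt_nonneg (f := fun y => (-1) ^ n * (sin y - sinTaylor n y))
    (fun y _ => ((hasDerivAt_sin y).sub (hasDerivAt_sinTaylor n y)).const_mul _) hcos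
    (by simp [sinTaylor_apply_zero]) hx

theorem neg_one_pow_mul_cos_sub_cosTaylor_succ_nonneg_of_sin {n : ℕ}
    (hsin : ∀ y, 0 ≤ y → 0 ≤ (-1) ^ n * (sin y - sinTaylor n y)) {x : ℝ} (hx : 0 ≤ x) :
    0 ≤ (-1) ^ (n + 1) * (cos x - cosTaylor (n + 1) x) :=
  nonneg_of_hasDerivAt_nonneg (f := fun y => (-1) ^ (n + 1) * (cos y - cosTaylor (n + 1) y))
    (fun y _ => (((hasDerivAt_cos y).sub (hasDerivAt_cosTaylor_succ n y)).const_mul _).congr_deriv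
      (by ring))
    hsin (by simp [cosTaylor_succ_apply_zero]) hx

theorem neg_one_pow_mul_cos_sub_cosTaylor_nonneg (n : ℕ) {x : ℝ} (hx : 0 ≤ x) :
    0 ≤ (-1) ^ (n + 1) * (cos x - cosTaylor (n + 1) x) := by
  induction n generalizing x with
  | zero => simpa [cosTaylor] using cos_le_one x
  | succ n ih =>
    exact neg_one_pow_mul_cos_sub_cosTaylor_succ_nonneg_of_sin
      (fun y hy => neg_one_pow_mul_sin_sub_sinTaylor_nonneg (fun z hz => ih hz) hy) hx

theorem sin_le_sinTaylor_of_odd {n : ℕ} (hn : Odd n) {x : ℝ} (hx : 0 ≤ x) :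
    sin x ≤ sinTaylor n x := by
  have h := neg_one_pow_mul_sin_sub_sinTaylor_nonneg
    (fun y hy => neg_one_pow_mul_cos_sub_cosTaylor_nonneg (n - 1) hy) hx
  rw [Nat.sub_add_cancel hn.pos, hn.neg_one_pow] at h
  linarith

theorem sinTaylor_add_two_le_of_odd {n : ℕ} (hn : Odd n) {x : ℝ} (hx : 0 ≤ x)
    (hxn : x ^ 2 ≤ (2 * n + 2) * (2 * n + 3)) : sinTaylor (n + 2) x ≤ sinTaylor n x := by
  have hterm := pow_add_two_div_factorial_le (k := 2 * n + 1) hx (by push_cast; linarith)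
  simp only [sinTaylor, sum_range_succ, hn.neg_one_pow, hn.add_one.neg_one_pow]
  ring_nf at hterm ⊢
  linarith

theorem sin_taylor_upper (s : ℕ) (x : ℝ) (hx : 0 ≤ x)
    (hx2 : x ≤ Real.sqrt ((4 * s + 4) * (4 * s + 5))) :
    (∑ i ∈ Finset.range (2 * s + 1), (-1 : ℝ) ^ i * x ^ (2 * i + 1) / (Nat.factorial (2 * i + 1))) ≥
      (∑ i ∈ Finset.range (2 * s + 3), (-1 : ℝ) ^ i * x ^ (2 * i + 1) / (Nat.factorial (2 * i + 1))) ∧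
    (∑ i ∈ Finset.range (2 * s + 3), (-1 : ℝ) ^ i * x ^ (2 * i + 1) / (Nat.factorial (2 * i + 1))) ≥
      Real.sin x := by
  have hsq : x ^ 2 ≤ (4 * s + 4) * (4 * s + 5) := (Real.le_sqrt hx (by positivity)).mp hx2
  exact ⟨sinTaylor_add_two_le_of_odd (odd_two_mul_add_one s) hx (hsq.trans_eq (by push_cast; ring)),
    sin_le_sinTaylor_of_odd ⟨s + 1, by ring⟩ hx⟩
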